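/- arXiv:2206.00376 — 4 statements merged into one kernel-verified Lean document; each statement's English description precedes it below -/
import Mathlib

section
/- For any infinite word x over a finite alphabet and any n > 0, the factor complexity satisfies p_x(n) ≤ n · s_x(A_x(n)), where A_x(n) is the length of the shortest prefix of x containing all factors of x of length n. -/
open scoped Classical

/-- `u` occurs in `w` starting at (0-based) position `i`. -/
def occursAt {α : Type*} (w u : List α) (i : ℕ) : Prop := (w.drop i).take u.length = u

/-- `u` is a factor of the finite word `w`. -/
def IsFactorOf {α : Type*} (w u : List α) : Prop := ∃ i, occursAt w u i

/-- `Γ` is a string attractor of the finite word `w` (positions are 0-based). -/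
def IsAttractor {α : Type*} (w : List α) (Γ : Finset ℕ) : Prop :=
  (∀ k ∈ Γ, k < w.length) ∧
  ∀ u : List α, u ≠ [] → IsFactorOf w u →
    ∃ i, occursAt w u i ∧ ∃ k ∈ Γ, i ≤ k ∧ k < i + u.length

/-- `γ*(w)`: minimum size of a string attractor of `w`. -/
noncomputable def gammaStar {α : Type*} (w : List α) : ℕ :=
  sInf {n | ∃ Γ : Finset ℕ, IsAttractor w Γ ∧ Γ.card = n}

/-- `span(w)`: minimum of (rightmost − leftmost position) over string attractors of `w`. -/
noncomputable def spanW {α : Type*} (w : List α) : ℕ :=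
  sInf {d | ∃ Γ : Finset ℕ, IsAttractor w Γ ∧ sSup (Γ : Set ℕ) - sInf (Γ : Set ℕ) = d}

/-- `lm(w)`: minimum rightmost position over string attractors of `w`. -/
noncomputable def lmW {α : Type*} (w : List α) : ℕ :=
  sInf {m | ∃ Γ : Finset ℕ, IsAttractor w Γ ∧ sSup (Γ : Set ℕ) = m}

/-- prefix of length `n` of the infinite word `x`. -/
def pref {α : Type*} (x : ℕ → α) (n : ℕ) : List α := (List.range n).map x

/-- the factor of length `m` of `x` starting at position `i`. -/
def factorAt {α : Type*} (x : ℕ → α) (i m : ℕ) : List α := (List.range m).map (fun t => x (i + t))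

/-- `u` is a factor of the infinite word `x`. -/
def IsFactorInf {α : Type*} (x : ℕ → α) (u : List α) : Prop := ∃ i, u = factorAt x i u.length

/-- factor complexity `p_x(n)`. -/
noncomputable def complexity {α : Type*} (x : ℕ → α) (n : ℕ) : ℕ :=
  {u : List α | u.length = n ∧ IsFactorInf x u}.ncard

/-- appearance function `A_x(n)`: least `m` such that the prefix of length `m`
contains all factors of `x` of length `n`. -/
noncomputable def appearance {α : Type*} (x : ℕ → α) (n : ℕ) : ℕ :=
  sInf {m | ∀ u : List α, u.length = n → IsFactorInf x u → IsFactorOf (pref x m) u}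

/-- `x` is ultimately periodic. -/
def UltPeriodic {α : Type*} (x : ℕ → α) : Prop :=
  ∃ p N : ℕ, 0 < p ∧ ∀ i, N ≤ i → x (i + p) = x i

/-- `x` is recurrent: every factor occurs infinitely often. -/
def Recurrent {α : Type*} (x : ℕ → α) : Prop :=
  ∀ u : List α, IsFactorInf x u → ∀ N : ℕ, ∃ i, N ≤ i ∧ u = factorAt x i u.length

/-- `u ^ k`: the `k`-th power of a finite word. -/
def listPow {α : Type*} (u : List α) : ℕ → List α
  | 0 => []
  | k + 1 => u ++ listPow u k

/-- `x` is ω-power free. -/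
def OmegaPowerFree {α : Type*} (x : ℕ → α) : Prop :=
  ∀ u : List α, u ≠ [] → IsFactorInf x u → ∃ k : ℕ, ¬ IsFactorInf x (listPow u k)

lemma pref_length {α : Type*} (x : ℕ → α) (m : ℕ) : (pref x m).length = m := by
  simp [pref]

lemma occursAt_pref {α : Type*} (x : ℕ → α) {m i n : ℕ} (h : i + n ≤ m) :
    occursAt (pref x m) (factorAt x i n) i := by
  unfold occursAt factorAt pref
  apply List.ext_getElem
  · simp; omega
  · intro j h1 h2
    simp only [List.getElem_take, List.getElem_drop, List.getElem_map, List.getElem_range]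

lemma occursAt_pref_eq {α : Type*} (x : ℕ → α) {m i n : ℕ} {u : List α}
    (hlen : u.length = n) (hn : 0 < n) (h : occursAt (pref x m) u i) :
    i + n ≤ m ∧ u = factorAt x i n := by
  unfold occursAt at h
  have hlen2 : ((pref x m).drop i).take u.length = u := h
  have hle : i + n ≤ m := by
    have := congrArg List.length hlen2
    simp [pref, hlen] at this
    omega
  refine ⟨hle, ?_⟩
  have := occursAt_pref x (n := n) (i := i) hle
  unfold occursAt at this
  rw [← h, hlen]
  rw [(show (factorAt x i n).length = n by simp [factorAt])] at this
  exact this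

/-- `p_x(n) ≤ n · s_x(A_x(n))`. -/
theorem stmt1 {α : Type*} [Fintype α] (x : ℕ → α) (n : ℕ) (hn : 0 < n) :
    complexity x n ≤ n * gammaStar (pref x (appearance x n)) := by
  classical
  set S : Set (List α) := {u : List α | u.length = n ∧ IsFactorInf x u} with hS
  -- the appearance set is nonempty
  have hSfin : S.Finite := (List.finite_length_eq α n).subset (fun u hu => hu.1)
  have hne : {m | ∀ u : List α, u.length = n → IsFactorInf x u →
      IsFactorOf (pref x m) u}.Nonempty := by
    set g : List α → ℕ := fun u => if h : IsFactorInf x u then h.choose + u.length else 0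
      with hg
    refine ⟨hSfin.toFinset.sup g, ?_⟩
    intro u hu1 hu2
    have hmem : u ∈ hSfin.toFinset := by simp [hS, hu1, hu2]
    have hle : g u ≤ hSfin.toFinset.sup g := Finset.le_sup hmem
    have hgu : g u = hu2.choose + u.length := by simp [hg, hu2]
    have hspec : u = factorAt x hu2.choose u.length := hu2.choose_spec
    refine ⟨hu2.choose, ?_⟩
    have : occursAt (pref x (hSfin.toFinset.sup g)) (factorAt x hu2.choose u.length)
        hu2.choose := occursAt_pref x (by omega)
    rwa [← hspec] at this
  have hm : appearance x n ∈ {m | ∀ u : List α, u.length = n → IsFactorInf x u →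
      IsFactorOf (pref x m) u} := Nat.sInf_mem hne
  set m := appearance x n
  set w := pref x m with hw
  -- the attractor set is nonempty
  have hattr : IsAttractor w (Finset.range w.length) := by
    constructor
    · intro k hk; simpa using hk
    · intro u hu ⟨i, hi⟩
      refine ⟨i, hi, i, ?_, le_refl i, ?_⟩
      · have hlen := congrArg List.length hi
        simp at hlen
        have : 0 < u.length := List.length_pos_iff.mpr hu
        simp [Finset.mem_range]
        omega
      · have : 0 < u.length := List.length_pos_iff.mpr hu
        omega
  have hγne : {c | ∃ Γ : Finset ℕ, IsAttractor w Γ ∧ Γ.card = c}.Nonempty :=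
    ⟨(Finset.range w.length).card, Finset.range w.length, hattr, rfl⟩
  have hγ : gammaStar w ∈ {c | ∃ Γ : Finset ℕ, IsAttractor w Γ ∧ Γ.card = c} :=
    Nat.sInf_mem hγne
  obtain ⟨Γ, hΓ, hcard⟩ := hγ
  -- build an injection S → Γ × Fin n
  have hmap : ∀ u ∈ S, ∃ i, occursAt w u i ∧ ∃ k ∈ Γ, i ≤ k ∧ k < i + n := by
    intro u hu
    have huf : IsFactorOf w u := hm u hu.1 hu.2
    have hune : u ≠ [] := by
      intro h; rw [h] at hu; simp [hS] at hu; omega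
    obtain ⟨i, hi, k, hk, h1, h2⟩ := hΓ.2 u hune huf
    exact ⟨i, hi, k, hk, h1, by rwa [hu.1] at h2⟩
  set f : S → Γ × Fin n := fun u =>
    ⟨⟨(hmap u u.2).choose_spec.2.choose, (hmap u u.2).choose_spec.2.choose_spec.1⟩,
     ⟨(hmap u u.2).choose_spec.2.choose - (hmap u u.2).choose, by
        have h := (hmap u u.2).choose_spec.2.choose_spec.2
        omega⟩⟩ with hf
  have hinj : Function.Injective f := by
    intro u v huv
    have hu := (hmap u u.2).choose_spec
    have hv := (hmap v v.2).choose_spec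
    have hk : (hmap u u.2).choose_spec.2.choose = (hmap v v.2).choose_spec.2.choose := by
      have := congrArg (fun p => (p.1 : ℕ)) huv; simpa [hf] using this
    have hd : (hmap u u.2).choose_spec.2.choose - (hmap u u.2).choose
        = (hmap v v.2).choose_spec.2.choose - (hmap v v.2).choose := by
      have := congrArg (fun p => (p.2 : ℕ)) huv; simpa [hf] using this
    have hi : (hmap u u.2).choose = (hmap v v.2).choose := by
      have h1 := hu.2.choose_spec.2.1
      have h2 := hv.2.choose_spec.2.1
      omega
    have hue := occursAt_pref_eq x u.2.1 hn hu.1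
    have hve := occursAt_pref_eq x v.2.1 hn hv.1
    apply Subtype.ext
    rw [hue.2, hve.2, hi]
  -- count
  have hcount : complexity x n ≤ Γ.card * n := by
    have h1 : complexity x n = Nat.card S := (Nat.card_coe_set_eq S).symm
    have h2 : Nat.card S ≤ Nat.card (Γ × Fin n) := Nat.card_le_card_of_injective f hinj
    have h3 : Nat.card (Γ × Fin n) = Γ.card * n := by
      simp [Nat.card_prod, Nat.card_eq_finsetCard]
    omega
  rw [hcard] at hcount
  rw [Nat.mul_comm]
  exact hcount
end

section
/- For any nonempty finite words u, v, the minimum string attractor size satisfies γ*(uv) ≤ γ*(u) + γ*(v) + 1. -/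
open scoped Classical

section Occurrence

variable {α : Type*}

lemma occursAt.add_length_le {w f : List α} {i : ℕ} (h : occursAt w f i) (hf : f ≠ []) :
    i + f.length ≤ w.length := by
  have hlen := congrArg List.length h
  simp only [List.length_take, List.length_drop] at hlen
  have := List.length_pos_iff.2 hf
  omega

lemma occursAt_append_left_iff (u v : List α) {f : List α} {i : ℕ}
    (hle : i + f.length ≤ u.length) : occursAt (u ++ v) f i ↔ occursAt u f i := by
  unfold occursAt
  rw [List.drop_append_of_le_length (by omega),
    List.take_append_of_le_length (by simp only [List.length_drop]; omega)]

lemma occursAt_append_right_iff (u v : List α) {f : List α} {j : ℕ} :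
    occursAt (u ++ v) f (u.length + j) ↔ occursAt v f j := by
  unfold occursAt
  rw [List.drop_length_add_append]

end Occurrence

namespace IsAttractor

variable {α : Type*}

lemma range_length (w : List α) : IsAttractor w (Finset.range w.length) := by
  refine ⟨fun k hk => Finset.mem_range.1 hk, fun f hf ⟨i, hi⟩ => ?_⟩
  have hle := hi.add_length_le hf
  have := List.length_pos_iff.2 hf
  exact ⟨i, hi, i, Finset.mem_range.2 (by omega), le_rfl, by omega⟩

/-- Γᵤ handles factors of `u`, the shifted Γᵥ factors of `v`, and the last position of `u`
every factor crossing the border. -/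
lemma append {u v : List α} {Γu Γv : Finset ℕ} (hΓu : IsAttractor u Γu)
    (hΓv : IsAttractor v Γv) (hu : u ≠ []) :
    IsAttractor (u ++ v) (Γu ∪ Γv.map (addRightEmbedding u.length) ∪ {u.length - 1}) := by
  have hupos := List.length_pos_iff.2 hu
  refine ⟨fun k hk => ?_, fun f hf ⟨i, hi⟩ => ?_⟩
  · simp only [Finset.mem_union, Finset.mem_map, addRightEmbedding_apply,
      Finset.mem_singleton] at hk
    rw [List.length_append]
    rcases hk with (hk | ⟨j, hj, rfl⟩) | rfl
    · linarith [hΓu.1 k hk]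
    · linarith [hΓv.1 j hj]
    · omega
  have hfpos := List.length_pos_iff.2 hf
  by_cases hleft : i + f.length ≤ u.length
  · obtain ⟨i', hi', k, hk, hik, hki'⟩ :=
      hΓu.2 f hf ⟨i, (occursAt_append_left_iff u v hleft).1 hi⟩
    refine ⟨i', (occursAt_append_left_iff u v (hi'.add_length_le hf)).2 hi', k, ?_, hik, hki'⟩
    simp [hk]
  by_cases hright : u.length ≤ i
  · obtain ⟨j, hj, k, hk, hjk, hkj⟩ := hΓv.2 f hf ⟨i - u.length, by
      rwa [← occursAt_append_right_iff u v, Nat.add_sub_cancel' hright]⟩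
    refine ⟨u.length + j, (occursAt_append_right_iff u v).2 hj, k + u.length, ?_,
      by omega, by omega⟩
    simp only [Finset.mem_union, Finset.mem_map, addRightEmbedding_apply]
    exact Or.inl (Or.inr ⟨k, hk, rfl⟩)
  · exact ⟨i, hi, u.length - 1, by simp, by omega, by omega⟩

end IsAttractor

section GammaStar

variable {α : Type*}

lemma exists_isAttractor_card_eq_gammaStar (w : List α) :
    ∃ Γ : Finset ℕ, IsAttractor w Γ ∧ Γ.card = gammaStar w :=
  Nat.sInf_mem (s := {n | ∃ Γ : Finset ℕ, IsAttractor w Γ ∧ Γ.card = n})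
    ⟨_, _, IsAttractor.range_length w, rfl⟩

lemma gammaStar_le_card {w : List α} {Γ : Finset ℕ} (h : IsAttractor w Γ) :
    gammaStar w ≤ Γ.card :=
  Nat.sInf_le ⟨Γ, h, rfl⟩

end GammaStar

theorem stmt3_general {α : Type*} (u v : List α) (hu : u ≠ []) :
    gammaStar (u ++ v) ≤ gammaStar u + gammaStar v + 1 := by
  obtain ⟨Γu, hΓu, hcu⟩ := exists_isAttractor_card_eq_gammaStar u
  obtain ⟨Γv, hΓv, hcv⟩ := exists_isAttractor_card_eq_gammaStar v
  rw [← hcu, ← hcv]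
  calc gammaStar (u ++ v)
      ≤ (Γu ∪ Γv.map (addRightEmbedding u.length) ∪ {u.length - 1}).card :=
        gammaStar_le_card (hΓu.append hΓv hu)
    _ ≤ (Γu ∪ Γv.map (addRightEmbedding u.length)).card + 1 := Finset.card_union_le _ _
    _ ≤ Γu.card + Γv.card + 1 := by
        grw [Finset.card_union_le, Finset.card_map]

/-- `γ*(uv) ≤ γ*(u) + γ*(v) + 1`. -/
theorem stmt3 {α : Type*} (u v : List α) (hu : u ≠ []) (hv : v ≠ []) :
    gammaStar (u ++ v) ≤ gammaStar u + gammaStar v + 1 :=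
  stmt3_general u v hu
end

section
/- For any finite word w and any 0 < n ≤ |w|, the number of distinct factors of w of length n is at most n + span(w). -/
open scoped Classical

/-!
Take an attractor `Γ` realising `span(w)`, with leftmost position `a` and rightmost position `b`.
Every factor of length `n` has an occurrence crossing a position of `Γ`, so it starts somewhere in
the window `[a + 1 - n, b]`; the factor is determined by its starting position, hence there are at
most `b - a + n` of them.
-/

section

open Finset

variable {α : Type*}

theorem occursAt.lt_length {w u : List α} {i : ℕ} (h : occursAt w u i) (hu : u ≠ []) :
    i < w.length := by
  by_contra! hi
  rw [occursAt, List.drop_eq_nil_of_le hi, List.take_nil] at h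
  exact hu h.symm

theorem isAttractor_range_length (w : List α) : IsAttractor w (range w.length) := by
  refine ⟨fun k hk => mem_range.mp hk, fun u hu ⟨i, hi⟩ => ⟨i, hi, i, ?_, le_rfl, ?_⟩⟩
  · exact mem_range.mpr (hi.lt_length hu)
  · simpa [Nat.pos_iff_ne_zero] using hu

theorem exists_isAttractor_sSup_sub_sInf_eq_spanW (w : List α) :
    ∃ Γ : Finset ℕ, IsAttractor w Γ ∧ sSup (Γ : Set ℕ) - sInf (Γ : Set ℕ) = spanW w :=
  Nat.sInf_mem
    (s := {d | ∃ Γ : Finset ℕ, IsAttractor w Γ ∧ sSup (Γ : Set ℕ) - sInf (Γ : Set ℕ) = d})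
    ⟨_, _, isAttractor_range_length w, rfl⟩

theorem IsAttractor.factors_subset_image_Icc {w : List α} {Γ : Finset ℕ} (hΓ : IsAttractor w Γ)
    {n : ℕ} (hn : 0 < n) (hne : Γ.Nonempty) :
    {u : List α | u.length = n ∧ IsFactorOf w u} ⊆
      ↑((Icc (Γ.min' hne + 1 - n) (Γ.max' hne)).image fun i => (w.drop i).take n) := by
  rintro u ⟨rfl, hfac⟩
  obtain ⟨i, hocc, k, hk, hik, hki⟩ := hΓ.2 u (List.ne_nil_of_length_pos hn) hfac
  have hmin := Γ.min'_le k hk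
  have hmax := Γ.le_max' k hk
  exact mem_image.mpr ⟨i, mem_Icc.mpr ⟨by omega, by omega⟩, hocc⟩

theorem IsAttractor.ncard_factors_le {w : List α} {Γ : Finset ℕ} (hΓ : IsAttractor w Γ)
    {n : ℕ} (hn : 0 < n) :
    {u : List α | u.length = n ∧ IsFactorOf w u}.ncard ≤
      n + (sSup (Γ : Set ℕ) - sInf (Γ : Set ℕ)) := by
  rcases Γ.eq_empty_or_nonempty with rfl | hne
  · have hempty : {u : List α | u.length = n ∧ IsFactorOf w u} = ∅ := by
      refine Set.eq_empty_of_forall_notMem fun u ⟨hlen, hfac⟩ => ?_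
      obtain ⟨_, _, k, hk, _⟩ := hΓ.2 u (List.ne_nil_of_length_pos (hlen ▸ hn)) hfac
      exact notMem_empty k hk
    simp [hempty]
  · rw [hne.csSup_eq_max', hne.csInf_eq_min']
    calc {u : List α | u.length = n ∧ IsFactorOf w u}.ncard
        ≤ ((Icc (Γ.min' hne + 1 - n) (Γ.max' hne)).image fun i => (w.drop i).take n).card := by
          rw [← Set.ncard_coe_finset]
          exact Set.ncard_le_ncard (hΓ.factors_subset_image_Icc hn hne)
      _ ≤ (Icc (Γ.min' hne + 1 - n) (Γ.max' hne)).card := card_image_le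
      _ ≤ n + (Γ.max' hne - Γ.min' hne) := by
          rw [Nat.card_Icc]
          omega

end

theorem stmt7_general {α : Type*} (w : List α) (n : ℕ) (h1 : 0 < n) :
    {u : List α | u.length = n ∧ IsFactorOf w u}.ncard ≤ n + spanW w := by
  obtain ⟨Γ, hΓ, hspan⟩ := exists_isAttractor_sSup_sub_sInf_eq_spanW w
  exact hspan ▸ hΓ.ncard_factors_le h1

/-- the number of distinct length-`n` factors of `w` is at most `n + span(w)`. -/
theorem stmt7 {α : Type*} (w : List α) (n : ℕ) (h1 : 0 < n) (h2 : n ≤ w.length) :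
    {u : List α | u.length = n ∧ IsFactorOf w u}.ncard ≤ n + spanW w :=
  stmt7_general w n h1
end

section
/- If there exists k > 0 such that span_x(n) ≤ k for infinitely many n, then the infinite word x is ultimately periodic or recurrent. -/
open scoped Classical

lemma factorAt_length {α : Type*} (x : ℕ → α) (i m : ℕ) : (factorAt x i m).length = m := by
  simp [factorAt]

lemma pref_drop_take {α : Type*} (x : ℕ → α) {i m n : ℕ} (h : i + m ≤ n) :
    ((pref x n).drop i).take m = factorAt x i m := by
  apply List.ext_getElem
  · simp [pref, factorAt]; omega
  · intro t h1 h2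
    simp [pref, factorAt]

lemma occursAt_of_le {α : Type*} (x : ℕ → α) {i m n : ℕ} (h : i + m ≤ n) :
    occursAt (pref x n) (factorAt x i m) i := by
  unfold occursAt
  rw [factorAt_length]
  exact pref_drop_take x h

lemma occursAt_pref_s11 {α : Type*} {x : ℕ → α} {u : List α} {i n : ℕ}
    (hu : u ≠ []) (hocc : occursAt (pref x n) u i) :
    i + u.length ≤ n ∧ u = factorAt x i u.length := by
  have hupos : 0 < u.length := List.length_pos_iff.mpr hu
  have hlen : (((pref x n).drop i).take u.length).length = u.length := by rw [hocc]
  simp [pref] at hlen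
  have hle : i + u.length ≤ n := by omega
  exact ⟨hle, by rw [← pref_drop_take x hle]; exact hocc.symm⟩

lemma factorAt_inj {α : Type*} {x : ℕ → α} {i j m : ℕ}
    (h : factorAt x i m = factorAt x j m) : ∀ t < m, x (i + t) = x (j + t) := by
  intro t ht
  have h1 : (factorAt x i m)[t]'(by simpa [factorAt] using ht) =
      (factorAt x j m)[t]'(by simpa [factorAt] using ht) := List.getElem_of_eq h _
  simpa [factorAt] using h1

lemma occursAt_lt_length {α : Type*} {w u : List α} {i : ℕ}
    (hu : u ≠ []) (hocc : occursAt w u i) : i + u.length ≤ w.length := by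
  have hupos : 0 < u.length := List.length_pos_iff.mpr hu
  have hlen : ((w.drop i).take u.length).length = u.length := by rw [hocc]
  simp at hlen
  omega

lemma full_attractor {α : Type*} (w : List α) : IsAttractor w (Finset.range w.length) := by
  constructor
  · intro k hk; simpa using hk
  · rintro u hu ⟨i, hi⟩
    have hupos : 0 < u.length := List.length_pos_iff.mpr hu
    have := occursAt_lt_length hu hi
    exact ⟨i, hi, i, by simp; omega, le_refl i, by omega⟩

lemma key {α : Type*} {x : ℕ → α} {u : List α} {N₀ k : ℕ}
    (hu0 : u ≠ []) (i₀ : ℕ) (hi₀N : i₀ < N₀) (hi₀ : u = factorAt x i₀ u.length)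
    (hlast : ∀ i, N₀ ≤ i → u ≠ factorAt x i u.length)
    {n m : ℕ} (hm : 0 < m) (hn : N₀ + u.length + k + m ≤ n)
    (hspan : spanW (pref x n) ≤ k) :
    ∃ i < N₀ + u.length + k, ∀ t < m, x (i + t) = x (N₀ + u.length + k + t) := by
  set C := N₀ + u.length + k with hC
  set S := {d | ∃ Γ : Finset ℕ, IsAttractor (pref x n) Γ ∧
      sSup (Γ : Set ℕ) - sInf (Γ : Set ℕ) = d} with hS
  have hSne : S.Nonempty :=
    ⟨_, Finset.range (pref x n).length, full_attractor _, rfl⟩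
  have hmem : spanW (pref x n) ∈ S := Nat.sInf_mem hSne
  obtain ⟨Γ, hΓ, hd⟩ := hmem
  have hdk : sSup (Γ : Set ℕ) - sInf (Γ : Set ℕ) ≤ k := hd ▸ hspan
  have hupos : 0 < u.length := List.length_pos_iff.mpr hu0
  -- u is a factor of pref x n
  have hufac : IsFactorOf (pref x n) u := by
    refine ⟨i₀, ?_⟩
    rw [hi₀]
    exact occursAt_of_le x (by omega)
  obtain ⟨i₁, hocc₁, k₁, hk₁Γ, hk₁l, hk₁r⟩ := hΓ.2 u hu0 hufac
  obtain ⟨hi₁n, hi₁eq⟩ := occursAt_pref_s11 hu0 hocc₁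
  have hi₁N : i₁ < N₀ := by
    by_contra hcon
    push_neg at hcon
    exact hlast i₁ hcon hi₁eq
  -- all attractor positions are < C
  have hbdd : BddAbove (Γ : Set ℕ) := Γ.finite_toSet.bddAbove
  have hinf : sInf (Γ : Set ℕ) ≤ k₁ := Nat.sInf_le (by exact_mod_cast hk₁Γ)
  have hallC : ∀ e ∈ Γ, e < C := by
    intro e he
    have hsup : e ≤ sSup (Γ : Set ℕ) := le_csSup hbdd (by exact_mod_cast he)
    omega
  -- the factor at position C of length m
  have hvne : factorAt x C m ≠ [] := by
    apply List.length_pos_iff.mp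
    rw [factorAt_length]; exact hm
  have hvfac : IsFactorOf (pref x n) (factorAt x C m) := by
    refine ⟨C, occursAt_of_le x ?_⟩
    omega
  obtain ⟨i, hocci, k₂, hk₂Γ, hk₂l, hk₂r⟩ := hΓ.2 _ hvne hvfac
  obtain ⟨hin, hieq⟩ := occursAt_pref_s11 hvne hocci
  rw [factorAt_length] at hieq
  have hiC : i < C := lt_of_le_of_lt hk₂l (hallC _ hk₂Γ)
  exact ⟨i, hiC, factorAt_inj hieq.symm⟩

/-- if `span_x(n) ≤ k` for infinitely many `n`, then `x` is
ultimately periodic or recurrent. -/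
theorem stmt11 {α : Type*} (x : ℕ → α) (k : ℕ) (hk : 0 < k)
    (h : ∀ N : ℕ, ∃ n, N < n ∧ spanW (pref x n) ≤ k) :
    UltPeriodic x ∨ Recurrent x := by
  by_cases hrec : Recurrent x
  · exact Or.inr hrec
  left
  unfold Recurrent at hrec
  push_neg at hrec
  obtain ⟨u, huf, N₀, hN₀⟩ := hrec
  have hu0 : u ≠ [] := by
    intro hnil
    exact hN₀ N₀ le_rfl (by simp [hnil, factorAt])
  obtain ⟨i₀, hi₀⟩ := huf
  have hi₀N : i₀ < N₀ := by
    by_contra hcon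
    push_neg at hcon
    exact hN₀ i₀ hcon hi₀
  set C := N₀ + u.length + k with hC
  have key_all : ∀ m, 0 < m → ∃ i < C, ∀ t < m, x (i + t) = x (C + t) := by
    intro m hm
    obtain ⟨n, hn1, hn2⟩ := h (C + m)
    exact key hu0 i₀ hi₀N hi₀ hN₀ hm (by omega) hn2
  have main : ∃ i < C, ∀ t, x (i + t) = x (C + t) := by
    by_contra hcon
    push_neg at hcon
    choose T hT using hcon
    set M := (Finset.range C).sup (fun i => if hi : i < C then T i hi + 1 else 0) with hM
    have hbound : ∀ i (hi : i < C), T i hi + 1 ≤ M := by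
      intro i hi
      have hle := Finset.le_sup (f := fun j => if hj : j < C then T j hj + 1 else 0)
        (Finset.mem_range.mpr hi)
      simpa only [dif_pos hi] using hle
    have hCpos : 0 < C := by omega
    have hMpos : 0 < M := lt_of_lt_of_le (Nat.succ_pos _) (hbound 0 hCpos)
    obtain ⟨i, hiC, hi⟩ := key_all M hMpos
    have hTi : T i hiC < M := hbound i hiC
    exact hT i hiC (hi _ hTi)
  obtain ⟨i, hiC, hper⟩ := main
  refine ⟨C - i, i, by omega, fun j hj => ?_⟩
  have h1 : x (i + (j - i)) = x (C + (j - i)) := hper (j - i)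
  have e1 : i + (j - i) = j := by omega
  have e2 : C + (j - i) = j + (C - i) := by omega
  rw [e1, e2] at h1
  exact h1.symm
end
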